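/- arXiv:2512.20008 — 3 statements merged into one kernel-verified Lean document; each statement's English description precedes it below -/
import Mathlib

section
/- For any α > 0, the function x ↦ ln γ(α,x) is concave on (0,∞), where γ(α,x) is the regularized lower incomplete Gamma function; specifically, defining ω(x) = (∫₀ˣ t^(α-1)e^(-t)dt)(α-1-x) - x^α e^(-x), one has ω(x) ≤ 0 for all x ≥ 0, implying log-concavity of γ(α,·). -/
open Real Set MeasureTheory intervalIntegral

/-- The regularized lower incomplete Gamma function. -/
noncomputable def regIncGamma (α x : ℝ) : ℝ :=
  (1 / Real.Gamma α) * ∫ t in (0 : ℝ)..x, t ^ (α - 1) * Real.exp (-t)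

section aux
variable {α : ℝ} (hα : 0 < α)

private noncomputable def Ff (α : ℝ) : ℝ → ℝ := fun x => ∫ t in (0:ℝ)..x, t ^ (α - 1) * Real.exp (-t)

private lemma hInt (hα : 0 < α) : ∀ a b : ℝ, IntervalIntegrable (fun t => t ^ (α - 1) * Real.exp (-t)) volume a b := by
  intro a b
  exact (intervalIntegral.intervalIntegrable_rpow' (by linarith)).mul_continuousOn
    (Real.continuous_exp.comp continuous_neg).continuousOn

private lemma hFcont (hα : 0 < α) : Continuous (Ff α) :=
  intervalIntegral.continuous_primitive (hInt hα) 0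

private lemma hfc (hα : 0 < α) : ContinuousOn (fun t : ℝ => t ^ (α - 1) * Real.exp (-t)) (Ioi 0) := by
  intro t ht
  exact ((Real.continuousAt_rpow_const t (α - 1) (Or.inl (ne_of_gt ht))).mul
    (Real.continuous_exp.comp continuous_neg).continuousAt).continuousWithinAt

private lemma hF' (hα : 0 < α) {x : ℝ} (hx : 0 < x) :
    HasDerivAt (Ff α) (x ^ (α - 1) * Real.exp (-x)) x :=
  intervalIntegral.integral_hasDerivAt_right (hInt hα 0 x)
    ((hfc hα).stronglyMeasurableAtFilter isOpen_Ioi x hx)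
    ((hfc hα).continuousAt (isOpen_Ioi.mem_nhds hx))

private lemma hFpos (hα : 0 < α) {x : ℝ} (hx : 0 < x) : 0 < Ff α x := by
  apply intervalIntegral.intervalIntegral_pos_of_pos_on (hInt hα 0 x) _ hx
  intro t ht
  exact mul_pos (Real.rpow_pos_of_pos ht.1 _) (Real.exp_pos _)

private noncomputable def ww (α : ℝ) : ℝ → ℝ :=
  fun x => Ff α x * (α - 1 - x) - x ^ α * Real.exp (-x)

private lemma hw' (hα : 0 < α) {x : ℝ} (hx : 0 < x) :
    HasDerivAt (ww α) (-(x ^ (α - 1) * Real.exp (-x)) - Ff α x) x := by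
  have h1 : HasDerivAt (fun y : ℝ => Ff α y * (α - 1 - y))
      (x ^ (α - 1) * Real.exp (-x) * (α - 1 - x) + Ff α x * (-1)) x :=
    (hF' hα hx).mul (((hasDerivAt_id x).const_sub (α - 1)))
  have h2 : HasDerivAt (fun y : ℝ => y ^ α * Real.exp (-y))
      (α * x ^ (α - 1) * Real.exp (-x) + x ^ α * (-Real.exp (-x))) x := by
    have ha : HasDerivAt (fun y : ℝ => y ^ α) (α * x ^ (α - 1)) x := by
      simpa using Real.hasDerivAt_rpow_const (p := α) (Or.inl hx.ne')
    have hb : HasDerivAt (fun y : ℝ => Real.exp (-y)) (-Real.exp (-x)) x := by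
      simpa [Function.comp_def] using ((Real.hasDerivAt_exp (-x)).comp x ((hasDerivAt_id x).neg))
    exact ha.mul hb
  have := h1.sub h2
  refine this.congr_deriv ?_
  have hx1 : x ^ (α - 1) * x = x ^ α := by
    rw [← Real.rpow_add_one hx.ne']; ring_nf
  linear_combination -(Real.exp (-x)) * hx1

private lemma hwle (hα : 0 < α) : ∀ x : ℝ, 0 ≤ x → ww α x ≤ 0 := by
  have hcont : Continuous (ww α) := by
    have hxα : Continuous fun x : ℝ => x ^ α := by
      rw [continuous_iff_continuousAt]
      exact fun x => Real.continuousAt_rpow_const x α (Or.inr hα.le)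
    exact ((hFcont hα).mul (by continuity)).sub
      (hxα.mul (Real.continuous_exp.comp continuous_neg))
  have hanti : AntitoneOn (ww α) (Ici 0) := by
    apply antitoneOn_of_deriv_nonpos (convex_Ici 0) hcont.continuousOn
    · rw [interior_Ici]
      exact fun x hx => ((hw' hα hx).differentiableAt).differentiableWithinAt
    · rw [interior_Ici]
      intro x hx
      rw [(hw' hα hx).deriv]
      have h1 : 0 ≤ x ^ (α - 1) * Real.exp (-x) :=
        mul_nonneg (Real.rpow_nonneg hx.le _) (Real.exp_pos _).le
      have h2 : 0 < Ff α x := hFpos hα hx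
      linarith
  intro x hx
  have h0 : ww α 0 = 0 := by
    simp [ww, Ff, intervalIntegral.integral_same, Real.zero_rpow hα.ne']
  calc ww α x ≤ ww α 0 := hanti (le_refl (0:ℝ)) hx hx
    _ = 0 := h0

end aux

theorem stmt_4 (α : ℝ) (hα : 0 < α) :
    (∀ x : ℝ, 0 ≤ x →
      (∫ t in (0 : ℝ)..x, t ^ (α - 1) * Real.exp (-t)) * (α - 1 - x)
        - x ^ α * Real.exp (-x) ≤ 0) ∧
    ConcaveOn ℝ (Set.Ioi (0 : ℝ)) (fun x : ℝ => Real.log (regIncGamma α x)) := by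
  constructor
  · exact fun x hx => hwle hα x hx
  · -- log (regIncGamma α x) = log (1/Γ α) + log (Ff α x) on Ioi 0
    have hΓ : 0 < Real.Gamma α := Real.Gamma_pos_of_pos hα
    -- derivative of log ∘ Ff
    have hlogF' : ∀ x ∈ Ioi (0:ℝ), HasDerivAt (fun y => Real.log (Ff α y))
        (x ^ (α - 1) * Real.exp (-x) / Ff α x) x := by
      intro x hx
      exact (hF' hα hx).log (hFpos hα hx).ne'
    have hconcF : ConcaveOn ℝ (Ioi (0:ℝ)) (fun x => Real.log (Ff α x)) := by
      apply AntitoneOn.concaveOn_of_deriv (convex_Ioi 0)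
      · intro x hx
        exact (hlogF' x hx).continuousAt.continuousWithinAt
      · rw [interior_Ioi]
        exact fun x hx => (hlogF' x hx).differentiableAt.differentiableWithinAt
      · rw [interior_Ioi]
        -- deriv (log ∘ Ff) = F'/F on Ioi 0; show this is antitone
        have hderiv_eq : ∀ x ∈ Ioi (0:ℝ),
            deriv (fun y => Real.log (Ff α y)) x = x ^ (α - 1) * Real.exp (-x) / Ff α x :=
          fun x hx => (hlogF' x hx).deriv
        have hphi' : ∀ x : ℝ, 0 < x → HasDerivAt (fun y => y ^ (α - 1) * Real.exp (-y) / Ff α y)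
            ((((α - 1) * x ^ (α - 1 - 1) * Real.exp (-x) + x ^ (α - 1) * (-Real.exp (-x))) * Ff α x
              - x ^ (α - 1) * Real.exp (-x) * (x ^ (α - 1) * Real.exp (-x))) / (Ff α x) ^ 2) x := by
          intro x hx
          have hN : HasDerivAt (fun y : ℝ => y ^ (α - 1) * Real.exp (-y))
              ((α - 1) * x ^ (α - 1 - 1) * Real.exp (-x) + x ^ (α - 1) * (-Real.exp (-x))) x := by
            have ha : HasDerivAt (fun y : ℝ => y ^ (α - 1)) ((α - 1) * x ^ (α - 1 - 1)) x :=
              Real.hasDerivAt_rpow_const (Or.inl hx.ne')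
            have hb : HasDerivAt (fun y : ℝ => Real.exp (-y)) (-Real.exp (-x)) x := by
              simpa [Function.comp_def] using ((Real.hasDerivAt_exp (-x)).comp x ((hasDerivAt_id x).neg))
            exact ha.mul hb
          exact hN.div (hF' hα hx) (hFpos hα hx).ne'
        have hphi_nonpos : ∀ x : ℝ, 0 < x →
            (((α - 1) * x ^ (α - 1 - 1) * Real.exp (-x) + x ^ (α - 1) * (-Real.exp (-x))) * Ff α x
              - x ^ (α - 1) * Real.exp (-x) * (x ^ (α - 1) * Real.exp (-x))) / (Ff α x) ^ 2 ≤ 0 := by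
          intro x hx
          apply div_nonpos_of_nonpos_of_nonneg _ (sq_nonneg _)
          -- numerator = x^(α-2) * exp(-x) * ww α x
          have key : ((α - 1) * x ^ (α - 1 - 1) * Real.exp (-x) + x ^ (α - 1) * (-Real.exp (-x))) * Ff α x
              - x ^ (α - 1) * Real.exp (-x) * (x ^ (α - 1) * Real.exp (-x))
              = x ^ (α - 2) * Real.exp (-x) * ww α x := by
            have e1 : x ^ (α - 1) = x ^ (α - 2) * x := by
              rw [← Real.rpow_add_one hx.ne']; ring_nf
            have e2 : x ^ (α - 1) * x ^ (α - 1) = x ^ (α - 2) * x ^ α := by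
              rw [← Real.rpow_add hx, ← Real.rpow_add hx]; ring_nf
            have e3 : (α - 1 - 1 : ℝ) = α - 2 := by ring
            rw [e3]
            simp only [ww]
            linear_combination (-(Real.exp (-x)) * Ff α x) * e1 - Real.exp (-x) ^ 2 * e2
          rw [key]
          have h1 : 0 ≤ x ^ (α - 2) * Real.exp (-x) :=
            mul_nonneg (Real.rpow_nonneg hx.le _) (Real.exp_pos _).le
          have h2 : ww α x ≤ 0 := hwle hα x hx.le
          exact mul_nonpos_of_nonneg_of_nonpos h1 h2
        -- antitone
        have : AntitoneOn (fun x => x ^ (α - 1) * Real.exp (-x) / Ff α x) (Ioi 0) := by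
          apply antitoneOn_of_deriv_nonpos (convex_Ioi 0)
          · intro x hx
            exact (hphi' x hx).continuousAt.continuousWithinAt
          · rw [interior_Ioi]
            exact fun x hx => (hphi' x hx).differentiableAt.differentiableWithinAt
          · rw [interior_Ioi]
            intro x hx
            rw [(hphi' x hx).deriv]
            exact hphi_nonpos x hx
        intro x hx y hy hxy
        rw [hderiv_eq x hx, hderiv_eq y hy]
        exact this hx hy hxy
    -- transfer to log ∘ regIncGamma
    have heq : ∀ x ∈ Ioi (0:ℝ),
        Real.log (regIncGamma α x) = Real.log (1 / Real.Gamma α) + Real.log (Ff α x) := by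
      intro x hx
      rw [regIncGamma]
      exact Real.log_mul (by positivity) (hFpos hα hx).ne'
    have hconc2 : ConcaveOn ℝ (Ioi (0:ℝ))
        (fun x => Real.log (1 / Real.Gamma α) + Real.log (Ff α x)) :=
      (concaveOn_const _ (convex_Ioi 0)).add hconcF
    refine ⟨hconc2.1, fun x hx y hy a b ha hb hab => ?_⟩
    have hxy : a • x + b • y ∈ Ioi (0:ℝ) := hconc2.1 hx hy ha hb hab
    have h2 := hconc2.2 hx hy ha hb hab
    simp only [smul_eq_mul] at h2 hxy ⊢
    rw [heq _ hxy, heq _ hx, heq _ hy]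
    linarith
end

section
/- Define ω(x) = (∫₀ˣ t^(α-1) e^(-t) dt)·(α - 1 - x) - x^α e^(-x) for α > 0 and x ≥ 0. Then ω(0) = 0 and ω is nonincreasing on [0,∞), hence ω(x) ≤ 0 for all x ≥ 0. -/
/-!
Writing `γ(α, x) = ∫₀ˣ t^(α-1) e^(-t) dt`, the product rule together with
`(x^α e^(-x))' = x^(α-1) e^(-x) (α - x)` gives `ω'(x) = -x^(α-1) e^(-x) - γ(α, x)`, which is
nonpositive for `x > 0`. Since `ω` is continuous on `[0, ∞)` and `ω(0) = 0`, it is antitone there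
and hence nonpositive.
-/

open Real Set MeasureTheory intervalIntegral

namespace LowerGammaLogConcave

/-- The (unregularized) lower incomplete Gamma function `γ(α, x)`. -/
noncomputable def lowerGamma (α x : ℝ) : ℝ :=
  ∫ t in (0 : ℝ)..x, t ^ (α - 1) * exp (-t)

noncomputable def omega (α x : ℝ) : ℝ :=
  lowerGamma α x * (α - 1 - x) - x ^ α * exp (-x)

variable {α x : ℝ}

lemma intervalIntegrable_rpow_sub_one_mul_exp_neg (hα : 0 < α) (a b : ℝ) :
    IntervalIntegrable (fun t => t ^ (α - 1) * exp (-t)) volume a b :=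
  (intervalIntegrable_rpow' (by linarith)).mul_continuousOn (by fun_prop)

lemma lowerGamma_nonneg (hx : 0 ≤ x) : 0 ≤ lowerGamma α x :=
  integral_nonneg hx fun _ ht => mul_nonneg (rpow_nonneg ht.1 _) (exp_pos _).le

lemma continuous_lowerGamma (hα : 0 < α) : Continuous (lowerGamma α) :=
  continuous_primitive (intervalIntegrable_rpow_sub_one_mul_exp_neg hα) 0

lemma hasDerivAt_lowerGamma (hα : 0 < α) (hx : x ≠ 0) :
    HasDerivAt (lowerGamma α) (x ^ (α - 1) * exp (-x)) x :=
  integral_hasDerivAt_right (intervalIntegrable_rpow_sub_one_mul_exp_neg hα 0 x)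
    (StronglyMeasurable.stronglyMeasurableAtFilter (by fun_prop))
    ((continuousAt_rpow_const x (α - 1) (Or.inl hx)).mul (by fun_prop))

lemma hasDerivAt_rpow_mul_exp_neg (hx : x ≠ 0) :
    HasDerivAt (fun y => y ^ α * exp (-y)) (x ^ (α - 1) * exp (-x) * (α - x)) x := by
  have h := HasDerivAt.fun_mul (c := fun y => y ^ α) (hasDerivAt_rpow_const (Or.inl hx))
    (hasDerivAt_neg x).exp
  refine h.congr_deriv ?_
  rw [← sub_add_cancel α 1, rpow_add_one hx, add_sub_cancel_right]
  ring

lemma hasDerivAt_omega (hα : 0 < α) (hx : x ≠ 0) :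
    HasDerivAt (omega α) (-(x ^ (α - 1) * exp (-x)) - lowerGamma α x) x := by
  have h := ((hasDerivAt_lowerGamma hα hx).fun_mul ((hasDerivAt_id' x).const_sub (α - 1))).fun_sub
    (hasDerivAt_rpow_mul_exp_neg (α := α) hx)
  exact h.congr_deriv (by ring)

lemma continuous_omega (hα : 0 < α) : Continuous (omega α) :=
  ((continuous_lowerGamma hα).mul (by fun_prop)).sub
    ((continuous_rpow_const hα.le).mul (by fun_prop))

lemma omega_zero (hα : 0 < α) : omega α 0 = 0 := by
  simp [omega, lowerGamma, zero_rpow hα.ne']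

lemma antitoneOn_omega (hα : 0 < α) : AntitoneOn (omega α) (Ici 0) := by
  refine antitoneOn_of_hasDerivWithinAt_nonpos (convex_Ici 0) (continuous_omega hα).continuousOn
    (fun x hx => (hasDerivAt_omega hα (ne_of_gt ?_)).hasDerivWithinAt) fun x hx => ?_
  · simpa using hx
  · rw [interior_Ici] at hx
    have hγ : 0 ≤ lowerGamma α x := lowerGamma_nonneg hx.le
    have hf : 0 ≤ x ^ (α - 1) * exp (-x) := mul_nonneg (rpow_nonneg hx.le _) (exp_pos _).le
    linarith

end LowerGammaLogConcave

open LowerGammaLogConcave in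
theorem stmt_5 (α : ℝ) (hα : 0 < α) :
    let ω : ℝ → ℝ := fun x =>
      (∫ t in (0 : ℝ)..x, t ^ (α - 1) * Real.exp (-t)) * (α - 1 - x)
        - x ^ α * Real.exp (-x)
    ω 0 = 0 ∧ AntitoneOn ω (Set.Ici (0 : ℝ)) ∧ ∀ x : ℝ, 0 ≤ x → ω x ≤ 0 := by
  show omega α 0 = 0 ∧ AntitoneOn (omega α) (Ici 0) ∧ ∀ x : ℝ, 0 ≤ x → omega α x ≤ 0
  refine ⟨omega_zero hα, antitoneOn_omega hα, fun x hx => ?_⟩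
  calc omega α x ≤ omega α 0 := antitoneOn_omega hα self_mem_Ici hx hx
    _ = 0 := omega_zero hα
end

section
/- For all x ≥ 0 and y > 0, the second derivative of χ(x,y) = exp(-(2^x - 1)/y) with respect to x satisfies ∂²χ/∂x² ≥ (ln 2)² e^(1/y) Ψ((3-√5)/2), where Ψ(v) = e^(-v)(v² - v). -/
open Real

lemma psi_lb {v : ℝ} (hv : 0 < v) :
    Real.exp (-v) * (v ^ 2 - v) ≥
      Real.exp (-((3 - Real.sqrt 5) / 2)) *
        (((3 - Real.sqrt 5) / 2) ^ 2 - (3 - Real.sqrt 5) / 2) := by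
  set w := (3 - Real.sqrt 5) / 2 with hw
  have h5 : Real.sqrt 5 ^ 2 = 5 := Real.sq_sqrt (by norm_num)
  have h5lb : 2 < Real.sqrt 5 := by nlinarith [Real.sqrt_nonneg 5]
  have h5ub : Real.sqrt 5 < 3 := by nlinarith [Real.sqrt_nonneg 5]
  have hw0 : 0 < w := by rw [hw]; linarith
  have hw1 : w < 1 / 2 := by rw [hw]; linarith
  have hwsq : w ^ 2 = 3 * w - 1 := by rw [hw]; nlinarith
  have key : Real.exp (w - v) * (v ^ 2 - v) ≥ w ^ 2 - w := by
    rcases le_or_gt 1 v with h | h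
    · have h1 : 0 ≤ v ^ 2 - v := by nlinarith
      nlinarith [Real.exp_pos (w - v)]
    · have ht : 0 < 1 + (v - w) := by linarith
      have h1 : 1 + (v - w) ≤ Real.exp (v - w) := by linarith [Real.add_one_le_exp (v - w)]
      have h2 : Real.exp (w - v) * Real.exp (v - w) = 1 := by
        rw [← Real.exp_add]; ring_nf
        exact Real.exp_zero
      have hEpos : 0 < Real.exp (w - v) := Real.exp_pos _
      have hneg : v ^ 2 - v < 0 := by nlinarith
      -- E ≤ 1/(1+t)
      have h3 : Real.exp (w - v) * (1 + (v - w)) ≤ 1 := by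
        calc Real.exp (w - v) * (1 + (v - w)) ≤ Real.exp (w - v) * Real.exp (v - w) :=
              by exact mul_le_mul_of_nonneg_left h1 hEpos.le
          _ = 1 := h2
      -- (v² - v) ≥ (w² - w)(1 + (v-w))  : equals (v-w)² ≥ 0
      have h4 : (w ^ 2 - w) * (1 + (v - w)) ≤ v ^ 2 - v := by nlinarith [sq_nonneg (v - w)]
      nlinarith [mul_pos hEpos ht, sq_nonneg (v - w)]
  have hxw : Real.exp (-v) = Real.exp (-w) * Real.exp (w - v) := by
    rw [← Real.exp_add]; ring_nf
  rw [hxw]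
  have := mul_le_mul_of_nonneg_left key (Real.exp_pos (-w)).le
  calc Real.exp (-w) * (w ^ 2 - w) ≤ Real.exp (-w) * (Real.exp (w - v) * (v ^ 2 - v)) := this
    _ = Real.exp (-w) * Real.exp (w - v) * (v ^ 2 - v) := by ring

lemma deriv1 (y : ℝ) (t : ℝ) :
    HasDerivAt (fun s : ℝ => Real.exp (-(Real.exp (Real.log 2 * s) - 1) / y))
      (Real.exp (-(Real.exp (Real.log 2 * t) - 1) / y) *
        (-(Real.exp (Real.log 2 * t) * Real.log 2) / y)) t := by
  have hu : HasDerivAt (fun s : ℝ => Real.exp (Real.log 2 * s))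
      (Real.exp (Real.log 2 * t) * Real.log 2) t := by
    have := ((hasDerivAt_id t).const_mul (Real.log 2)).exp
    simpa [mul_comm] using this
  have hg : HasDerivAt (fun s : ℝ => -(Real.exp (Real.log 2 * s) - 1) / y)
      (-(Real.exp (Real.log 2 * t) * Real.log 2) / y) t :=
    ((hu.sub_const 1).neg).div_const y
  exact hg.exp

lemma deriv2 (y : ℝ) (x : ℝ) :
    deriv (deriv (fun x : ℝ => Real.exp (-((2 : ℝ) ^ x - 1) / y))) x
      = (Real.log 2) ^ 2 * Real.exp (-((2 : ℝ) ^ x - 1) / y) *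
        (((2 : ℝ) ^ x / y) ^ 2 - (2 : ℝ) ^ x / y) := by
  have hfun : (fun x : ℝ => Real.exp (-((2 : ℝ) ^ x - 1) / y))
      = fun s : ℝ => Real.exp (-(Real.exp (Real.log 2 * s) - 1) / y) := by
    funext s
    rw [Real.rpow_def_of_pos (by norm_num : (0:ℝ) < 2)]
  rw [hfun]
  have hd1 : deriv (fun s : ℝ => Real.exp (-(Real.exp (Real.log 2 * s) - 1) / y))
      = fun t : ℝ => Real.exp (-(Real.exp (Real.log 2 * t) - 1) / y) *
        (-(Real.exp (Real.log 2 * t) * Real.log 2) / y) := by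
    funext t; exact (deriv1 y t).deriv
  rw [hd1]
  have hu : HasDerivAt (fun s : ℝ => Real.exp (Real.log 2 * s))
      (Real.exp (Real.log 2 * x) * Real.log 2) x := by
    have := ((hasDerivAt_id x).const_mul (Real.log 2)).exp
    simpa [mul_comm] using this
  have h2 : HasDerivAt (fun t : ℝ => Real.exp (-(Real.exp (Real.log 2 * t) - 1) / y) *
        (-(Real.exp (Real.log 2 * t) * Real.log 2) / y))
      (Real.exp (-(Real.exp (Real.log 2 * x) - 1) / y) *
          (-(Real.exp (Real.log 2 * x) * Real.log 2) / y) *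
          (-(Real.exp (Real.log 2 * x) * Real.log 2) / y)
        + Real.exp (-(Real.exp (Real.log 2 * x) - 1) / y) *
          (-(Real.exp (Real.log 2 * x) * Real.log 2 * Real.log 2) / y)) x := by
    exact (deriv1 y x).mul ((hu.mul_const (Real.log 2)).neg.div_const y)
  rw [h2.deriv]
  rw [Real.rpow_def_of_pos (by norm_num : (0:ℝ) < 2)]
  ring

theorem stmt_7 (x y : ℝ) (hx : 0 ≤ x) (hy : 0 < y) :
    let Ψ : ℝ → ℝ := fun v => Real.exp (-v) * (v ^ 2 - v)
    deriv (deriv (fun x : ℝ => Real.exp (-((2 : ℝ) ^ x - 1) / y))) x ≥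
      (Real.log 2) ^ 2 * Real.exp (1 / y) * Ψ ((3 - Real.sqrt 5) / 2) := by
  intro Ψ
  rw [deriv2 y x]
  set v := (2 : ℝ) ^ x / y with hv
  have h2x : 0 < (2 : ℝ) ^ x := Real.rpow_pos_of_pos (by norm_num) x
  have hv0 : 0 < v := div_pos h2x hy
  have hsplit : Real.exp (-((2 : ℝ) ^ x - 1) / y) = Real.exp (1 / y) * Real.exp (-v) := by
    rw [← Real.exp_add, hv]
    congr 1
    field_simp
    ring
  rw [hsplit]
  have hΨ : Ψ ((3 - Real.sqrt 5) / 2) ≤ Real.exp (-v) * (v ^ 2 - v) := psi_lb hv0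
  have hc : (0 : ℝ) ≤ (Real.log 2) ^ 2 * Real.exp (1 / y) :=
    mul_nonneg (sq_nonneg _) (Real.exp_pos _).le
  calc (Real.log 2) ^ 2 * Real.exp (1 / y) * Ψ ((3 - Real.sqrt 5) / 2)
      ≤ (Real.log 2) ^ 2 * Real.exp (1 / y) * (Real.exp (-v) * (v ^ 2 - v)) :=
        mul_le_mul_of_nonneg_left hΨ hc
    _ = (Real.log 2) ^ 2 * (Real.exp (1 / y) * Real.exp (-v)) * (v ^ 2 - v) := by ring
end
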